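/- arXiv:1306.2007 — 5 statements merged into one kernel-verified Lean document; each statement's English description precedes it below -/
import Mathlib

section
/- Let Λ be a free ℤ-module of finite rank, λ a primitive element of Λ, and μ ∈ Λ. Then for any integer r > 0, r divides the class [μ] in Λ/ℤλ if and only if r divides λ ∧ μ in Λ ∧ Λ. -/
/-!
If `ℤλ + rΛ` contains `μ`, then `λ ∧ μ ∈ r(Λ ∧ Λ)` since `λ ∧ λ = 0`. Conversely, a primitive `λ`
admits a functional `f` with `f λ = 1`: the values `φ λ` of all functionals form an ideal `(d)`
of `ℤ`, `d` divides every coordinate of `λ`, so `λ ∈ dΛ` and `d = ±1`. Contracting with `f`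
and projecting to degree one sends `λ ∧ μ` to `μ - f(μ)λ ≡ μ (mod ℤλ)`, and this linear map
carries `r(Λ ∧ Λ)` into `rΛ`.
-/

/-- An element of a `ℤ`-module is primitive if it is not a non-unit integer
multiple of another element. -/
def IsPrimitiveElt {M : Type*} [AddCommGroup M] [Module ℤ M] (x : M) : Prop :=
  ∀ (n : ℤ) (y : M), x = n • y → IsUnit n

theorem Module.Basis.exists_eq_smul_of_forall_dvd_repr {R M ι : Type*} [Semiring R]
    [AddCommMonoid M] [Module R M] (b : Module.Basis ι R M) {x : M} {d : R}
    (h : ∀ i, d ∣ b.repr x i) : ∃ y : M, x = d • y := by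
  choose c hc using h
  refine ⟨(b.repr x).sum fun i _ => c i • b i, ?_⟩
  conv_lhs => rw [← b.linearCombination_repr x]
  simp only [Finsupp.linearCombination_apply, Finsupp.sum, Finset.smul_sum, hc, mul_smul]

theorem IsPrimitiveElt.exists_dual_eq_one {M : Type*} [AddCommGroup M] [Module ℤ M]
    [Module.Free ℤ M] {x : M} (hx : IsPrimitiveElt x) : ∃ f : Module.Dual ℤ M, f x = 1 := by
  obtain ⟨d, hd⟩ :=
    (IsPrincipalIdealRing.principal (LinearMap.range (Module.Dual.eval ℤ M x))).principal
  let b := Module.Free.chooseBasis ℤ M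
  have hdvd (i) : d ∣ b.repr x i := by
    have hi : b.repr x i ∈ LinearMap.range (Module.Dual.eval ℤ M x) := ⟨b.coord i, rfl⟩
    rw [hd] at hi
    exact Ideal.mem_span_singleton.mp hi
  obtain ⟨y, hy⟩ := b.exists_eq_smul_of_forall_dvd_repr hdvd
  have hunit : IsUnit d := hx d y (by rw [hy, ← Int.cast_smul_eq_zsmul ℤ, Int.cast_id])
  have hone : (1 : ℤ) ∈ LinearMap.range (Module.Dual.eval ℤ M x) := by
    rw [hd]
    exact Ideal.mem_span_singleton.mpr hunit.dvd
  exact hone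

namespace ExteriorAlgebra

open CliffordAlgebra

variable {R M : Type*} [CommRing R] [AddCommGroup M] [Module R M]

theorem ι_mul_ι_eq_of_sub_mem_span {x y y' : M} (h : y - y' ∈ Submodule.span R {x}) :
    ι R x * ι R y = ι R x * ι R y' := by
  obtain ⟨c, hc⟩ := Submodule.mem_span_singleton.mp h
  rw [← sub_add_cancel y y', ← hc, map_add, map_smul, mul_add, mul_smul_comm, ι_sq_zero,
    smul_zero, zero_add]

theorem ιInv_contractLeft_ι_mul_ι (f : Module.Dual R M) (x y : M) :
    ιInv (contractLeft f (ι R x * ι R y)) = f x • y - f y • x := by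
  rw [contractLeft_ι_mul, contractLeft_ι, ← Algebra.commutes, ← Algebra.smul_def, map_sub,
    map_smul, map_smul, ι_leftInverse, ι_leftInverse]

theorem mkQ_ιInv_contractLeft_ι_mul_ι {f : Module.Dual R M} {x : M} (hf : f x = 1) (y : M) :
    (Submodule.span R {x}).mkQ (ιInv (contractLeft f (ι R x * ι R y))) =
      (Submodule.span R {x}).mkQ y := by
  rw [ιInv_contractLeft_ι_mul_ι, hf, one_smul, Submodule.mkQ_apply, Submodule.mkQ_apply,
    Submodule.Quotient.eq, sub_sub_cancel_left]
  exact neg_mem (Submodule.smul_mem _ _ (Submodule.mem_span_singleton_self x))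

end ExteriorAlgebra

theorem content_quotient_iff_content_wedge_general
    (Λ : Type*) [AddCommGroup Λ] [Module ℤ Λ] [Module.Free ℤ Λ]
    (l m : Λ) (hl : IsPrimitiveElt l) (r : ℤ) :
    (∃ y : Λ ⧸ Submodule.span ℤ {l},
        Submodule.Quotient.mk (p := Submodule.span ℤ {l}) m = r • y) ↔
    (∃ ω : ExteriorAlgebra ℤ Λ,
        ExteriorAlgebra.ι ℤ l * ExteriorAlgebra.ι ℤ m = r • ω) := by
  constructor
  · rintro ⟨y, hy⟩
    obtain ⟨y, rfl⟩ := Submodule.Quotient.mk_surjective _ y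
    have hmy : m - r • y ∈ Submodule.span ℤ {l} :=
      (Submodule.Quotient.eq _).mp (hy.trans (map_zsmul (Submodule.mkQ _) r y).symm)
    refine ⟨ExteriorAlgebra.ι ℤ l * ExteriorAlgebra.ι ℤ y, ?_⟩
    rw [ExteriorAlgebra.ι_mul_ι_eq_of_sub_mem_span hmy, map_zsmul, mul_smul_comm]
  · rintro ⟨ω, hω⟩
    obtain ⟨f, hf⟩ := hl.exists_dual_eq_one
    let g := (Submodule.span ℤ {l}).mkQ ∘ₗ ExteriorAlgebra.ιInv ∘ₗ CliffordAlgebra.contractLeft f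
    refine ⟨g ω, ?_⟩
    rw [← map_zsmul g, ← hω]
    exact (ExteriorAlgebra.mkQ_ιInv_contractLeft_ι_mul_ι hf m).symm

/-- For a free `ℤ`-module `Λ` of finite rank, a primitive `λ ∈ Λ`,
`μ ∈ Λ` and an integer `r > 0`: `r` divides the class of `μ` in `Λ/ℤλ` iff
`r` divides `λ ∧ μ` in the exterior square of `Λ`. -/
theorem content_quotient_iff_content_wedge
    (Λ : Type*) [AddCommGroup Λ] [Module ℤ Λ] [Module.Free ℤ Λ] [Module.Finite ℤ Λ]
    (l m : Λ) (hl : IsPrimitiveElt l) (r : ℤ) (hr : 0 < r) :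
    (∃ y : Λ ⧸ Submodule.span ℤ {l},
        Submodule.Quotient.mk (p := Submodule.span ℤ {l}) m = r • y) ↔
    (∃ ω : ExteriorAlgebra ℤ Λ,
        ExteriorAlgebra.ι ℤ l * ExteriorAlgebra.ι ℤ m = r • ω) :=
  content_quotient_iff_content_wedge_general Λ l m hl r
end

section
/- Let Λ be a free ℤ-module of finite rank, λ a primitive element of Λ, and μ ∈ Λ with λ, μ linearly independent. Then the integral content of the class [μ] in Λ/ℤλ equals the integral content of λ ∧ μ in Λ ∧ Λ. -/
/-- `r` is the integral content of `x`: the largest positive integer dividing `x`. -/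
def IsIntegralContent {M : Type*} [AddCommGroup M] [Module ℤ M] (r : ℤ) (x : M) : Prop :=
  0 < r ∧ (∃ y : M, x = r • y) ∧ ∀ s : ℤ, 0 < s → (∃ y : M, x = s • y) → s ≤ r

theorem IsPrimitiveElt.exists_dual_apply_eq_one {Λ : Type*} [AddCommGroup Λ] [inst : Module ℤ Λ]
    [Module.Free ℤ Λ] {l : Λ} (hl : IsPrimitiveElt l) : ∃ φ : Module.Dual ℤ Λ, φ l = 1 := by
  classical
  -- `•` in `IsPrimitiveElt` is `zsmul`, so move the basis to the canonical `ℤ`-module structure.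
  obtain rfl := Subsingleton.elim inst (AddCommGroup.toIntModule Λ)
  let b := Module.Free.chooseBasis ℤ Λ
  set c := b.repr l
  set d := c.support.gcd c
  have hl_eq : l = d • ∑ i ∈ c.support, (c i / d) • b i := by
    rw [Finset.smul_sum]
    conv_lhs => rw [← b.linearCombination_repr l, Finsupp.linearCombination_apply, Finsupp.sum]
    refine Finset.sum_congr rfl fun i hi => ?_
    rw [smul_smul, Int.mul_ediv_cancel' (Finset.gcd_dvd hi)]
  obtain ⟨g, hg⟩ := c.support.gcd_eq_sum_mul c
  refine ⟨d • ∑ i ∈ c.support, g i • b.coord i, ?_⟩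
  have hdual : (∑ i ∈ c.support, g i • b.coord i) l = d := by
    simp only [LinearMap.coe_sum, Finset.sum_apply, LinearMap.smul_apply, b.coord_apply,
      smul_eq_mul, d, hg, mul_comm, c]
  rw [LinearMap.smul_apply, hdual, smul_eq_mul, Int.isUnit_mul_self (hl _ _ hl_eq)]

namespace ExteriorAlgebra

variable {R M : Type*} [CommRing R] [AddCommGroup M] [Module R M]

variable (R) in
def quotWedge (l : M) : M ⧸ Submodule.span R {l} →ₗ[R] ExteriorAlgebra R M :=
  (Submodule.span R {l}).liftQ (LinearMap.mulLeft R (ι R l) ∘ₗ ι R) <| by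
    rw [Submodule.span_singleton_le_iff_mem, LinearMap.mem_ker, LinearMap.comp_apply,
      LinearMap.mulLeft_apply, ι_sq_zero]

theorem quotWedge_mk (l y : M) : quotWedge R l (Submodule.Quotient.mk y) = ι R l * ι R y :=
  rfl

def contractQuot (φ : Module.Dual R M) (l : M) :
    ExteriorAlgebra R M →ₗ[R] M ⧸ Submodule.span R {l} :=
  (Submodule.span R {l}).mkQ ∘ₗ ιInv ∘ₗ CliffordAlgebra.contractLeft φ

theorem contractQuot_leftInverse_quotWedge {φ : Module.Dual R M} {l : M} (hφ : φ l = 1) :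
    Function.LeftInverse (contractQuot φ l) (quotWedge R l) := by
  intro q
  induction q using Submodule.Quotient.induction_on with
  | H y =>
    have hcontract : CliffordAlgebra.contractLeft φ (ι R l * ι R y) = ι R y - φ y • ι R l := by
      rw [CliffordAlgebra.contractLeft_ι_mul, CliffordAlgebra.contractLeft_ι, hφ, one_smul,
        ← Algebra.commutes, ← Algebra.smul_def]
    have hmk_l : (Submodule.Quotient.mk l : M ⧸ Submodule.span R {l}) = 0 :=
      (Submodule.Quotient.mk_eq_zero _).2 (Submodule.mem_span_singleton_self l)
    simp [quotWedge_mk, contractQuot, hcontract, ι_leftInverse _, hmk_l]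

end ExteriorAlgebra

theorem exists_eq_zsmul_iff_of_leftInverse {M N : Type*} [AddGroup M] [AddGroup N]
    {F : N →+ M} {G : M →+ N} (hFG : Function.LeftInverse F G) (x : M) (s : ℤ) :
    (∃ y, x = s • y) ↔ ∃ z, G x = s • z :=
  ⟨fun ⟨y, hy⟩ => ⟨G y, by rw [hy, map_zsmul]⟩,
    fun ⟨z, hz⟩ => ⟨F z, by rw [← hFG x, hz, map_zsmul]⟩⟩

theorem isIntegralContent_iff_of_leftInverse {M N : Type*} [AddCommGroup M] [Module ℤ M]
    [AddCommGroup N] [Module ℤ N] {F : N →+ M} {G : M →+ N}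
    (hFG : Function.LeftInverse F G) (r : ℤ) (x : M) :
    IsIntegralContent r x ↔ IsIntegralContent r (G x) := by
  simp only [IsIntegralContent, exists_eq_zsmul_iff_of_leftInverse hFG]

theorem integralContent_quotient_eq_integralContent_wedge_general
    (Λ : Type*) [AddCommGroup Λ] [Module ℤ Λ] [Module.Free ℤ Λ]
    (l m : Λ) (hl : IsPrimitiveElt l) (r : ℤ) :
    IsIntegralContent r (Submodule.Quotient.mk (p := Submodule.span ℤ {l}) m) ↔
    IsIntegralContent r (ExteriorAlgebra.ι ℤ l * ExteriorAlgebra.ι ℤ m) := by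
  obtain ⟨φ, hφ⟩ := hl.exists_dual_apply_eq_one
  exact isIntegralContent_iff_of_leftInverse
    (F := (ExteriorAlgebra.contractQuot φ l).toAddMonoidHom)
    (G := (ExteriorAlgebra.quotWedge ℤ l).toAddMonoidHom)
    (ExteriorAlgebra.contractQuot_leftInverse_quotWedge hφ) r _

/-- For a free `ℤ`-module `Λ` of finite rank, `λ` primitive and
`λ, μ` linearly independent, the integral content of `[μ]` in `Λ/ℤλ` equals
the integral content of `λ ∧ μ` in `Λ ∧ Λ`. -/
theorem integralContent_quotient_eq_integralContent_wedge
    (Λ : Type*) [AddCommGroup Λ] [Module ℤ Λ] [Module.Free ℤ Λ] [Module.Finite ℤ Λ]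
    (l m : Λ) (hl : IsPrimitiveElt l) (hind : LinearIndependent ℤ ![l, m]) (r : ℤ) :
    IsIntegralContent r (Submodule.Quotient.mk (p := Submodule.span ℤ {l}) m) ↔
    IsIntegralContent r (ExteriorAlgebra.ι ℤ l * ExteriorAlgebra.ι ℤ m) :=
  integralContent_quotient_eq_integralContent_wedge_general Λ l m hl r
end

section
/- Let u, v, w ∈ ℤ with w > 0, u² - 4vw < 0 and gcd(u,v,w) = 1. For integers α, β, γ, η with α, β ≥ 0: the equation αβ - γ(γ + uη) = vwη² holds if and only if there exist a, b, c, d ∈ ℚ and k ∈ ℚ with k·(wa² - uac + vc²) = α, k·(wb² - ubd + vd²) = β, k·(wab - uad + vcd) = γ, and k·(ad - bc) = η. -/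
/-! The relation `αβ - γ(γ + uη) = vwη²` is the Gram-determinant identity
`Q(a,c) Q(b,d) - B (B + u Δ) = vw Δ²` for the binary form `Q = w x² - u x y + v y²`, its polar form
`B` and `Δ = ad - bc`, so it is necessary. Conversely, for `α ≠ 0` one takes `(a, c) = (1, 0)`,
scales by `k = α / w` and solves linearly for `b` and `d`; for `α = 0` negativity of the
discriminant forces `γ = η = 0`, and `(a, b, c, d) = (0, 1, 0, 0)` with `k = β / w` works. -/

def QuadraticSystemSolvable {K : Type*} [CommRing K] (u v w α β γ η : K) : Prop :=
  ∃ a b c d k : K,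
    k * (w * a ^ 2 - u * a * c + v * c ^ 2) = α ∧
    k * (w * b ^ 2 - u * b * d + v * d ^ 2) = β ∧
    k * (w * a * b - u * a * d + v * c * d) = γ ∧
    k * (a * d - b * c) = η

theorem QuadraticSystemSolvable.relation {K : Type*} [CommRing K] {u v w α β γ η : K}
    (h : QuadraticSystemSolvable u v w α β γ η) :
    α * β - γ * (γ + u * η) = v * w * η ^ 2 := by
  obtain ⟨a, b, c, d, k, rfl, rfl, rfl, rfl⟩ := h
  ring

theorem quadraticSystemSolvable_of_relation {K : Type*} [Field K] {u v w α β γ η : K}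
    (hw : w ≠ 0) (hdegen : α = 0 → γ = 0 ∧ η = 0)
    (h : α * β - γ * (γ + u * η) = v * w * η ^ 2) :
    QuadraticSystemSolvable u v w α β γ η := by
  by_cases hα : α = 0
  · obtain ⟨rfl, rfl⟩ := hdegen hα
    refine ⟨0, 1, 0, 0, β / w, ?_, ?_, ?_, ?_⟩ <;> field_simp <;> simp [hα]
  · refine ⟨1, (γ + u * η) / α, 0, η * w / α, α / w, ?_, ?_, ?_, ?_⟩
    · field_simp; ring
    · field_simp
      linear_combination -h
    · field_simp; ring
    · field_simp; ring

theorem eq_zero_and_eq_zero_of_disc_neg {R : Type*} [CommRing R] [LinearOrder R]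
    [IsStrictOrderedRing R] {u v w x y : R} (hdisc : u ^ 2 - 4 * v * w < 0)
    (h : x * (x + u * y) + v * w * y ^ 2 = 0) : x = 0 ∧ y = 0 := by
  have hsum : (2 * x + u * y) ^ 2 + (4 * v * w - u ^ 2) * y ^ 2 = 0 := by
    linear_combination 4 * h
  have hpos : 0 < 4 * v * w - u ^ 2 := by linarith
  have hy : y = 0 := by
    have hy2 : y ^ 2 = 0 := by nlinarith [sq_nonneg (2 * x + u * y), sq_nonneg y]
    exact pow_eq_zero_iff two_ne_zero |>.mp hy2
  subst hy
  exact ⟨pow_eq_zero_iff two_ne_zero |>.mp (by linear_combination h), rfl⟩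

theorem characterization_dim2_general
    (u v w : ℤ) (hdisc : u ^ 2 - 4 * v * w < 0)
    (α β γ η : ℤ) :
    α * β - γ * (γ + u * η) = v * w * η ^ 2 ↔
    ∃ a b c d k : ℚ,
      k * (w * a ^ 2 - u * a * c + v * c ^ 2) = α ∧
      k * (w * b ^ 2 - u * b * d + v * d ^ 2) = β ∧
      k * (w * a * b - u * a * d + v * c * d) = γ ∧
      k * (a * d - b * c) = η := by
  have hw : w ≠ 0 := by rintro rfl; nlinarith [sq_nonneg u]
  constructor
  · intro h
    refine quadraticSystemSolvable_of_relation (by exact_mod_cast hw) (fun hα ↦ ?_)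
      (by exact_mod_cast h)
    have hα : α = 0 := by exact_mod_cast hα
    have hγη := eq_zero_and_eq_zero_of_disc_neg hdisc (x := γ) (y := η) (by subst hα; linarith)
    exact_mod_cast hγη
  · intro hs
    exact_mod_cast QuadraticSystemSolvable.relation hs

/-- Theorem 3 of the paper, coordinate form: for coprime
`u, v, w` with `w > 0`, `u² - 4vw < 0`, and integers `α, β, γ, η` with
`α, β ≥ 0`, the Diophantine condition `αβ - γ(γ + uη) = vwη²` holds iff the
quadratic system admits a rational solution. -/
theorem characterization_dim2
    (u v w : ℤ) (hw : 0 < w) (hdisc : u ^ 2 - 4 * v * w < 0)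
    (hcop : Int.gcd u (Int.gcd v w) = 1)
    (α β γ η : ℤ) (hα : 0 ≤ α) (hβ : 0 ≤ β) :
    α * β - γ * (γ + u * η) = v * w * η ^ 2 ↔
    ∃ a b c d k : ℚ,
      k * (w * a ^ 2 - u * a * c + v * c ^ 2) = α ∧
      k * (w * b ^ 2 - u * b * d + v * d ^ 2) = β ∧
      k * (w * a * b - u * a * d + v * c * d) = γ ∧
      k * (a * d - b * c) = η :=
  characterization_dim2_general u v w hdisc α β γ η
end

section
/- For every positive integer t, ∑_{n=0}^{t} √(n(t-n)) ≤ (π/8)·t² - (t-2)/(6t). -/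
/-!
The function `f x = √(x (t - x))` vanishes at `0` and `t`, so the sum is the trapezoidal sum
of `f` on `[0, t]`, whose integral is `π t² / 8`. Since `f'' = -t² / (4 (x (t - x))^{3/2})` and
`x (t - x) ≤ t² / 4`, we have `f'' ≤ -2 / t`, so `f x + x² / t` is concave on `[0, t]`; on each
unit interval this improves the trapezoidal bound for concave functions by `1 / (6 t)`. Summing
over the `t` intervals bounds the sum by `π t² / 8 - 1 / 6`, which is at most the claimed bound.
-/

open Real Set Finset MeasureTheory

lemma ConcaveOn.trapezoid_le_integral {g : ℝ → ℝ} {a b : ℝ} (hab : a ≤ b)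
    (hg : ConcaveOn ℝ (Icc a b) g) (hint : IntervalIntegrable g volume a b) :
    (b - a) * (g a + g b) / 2 ≤ ∫ x in a..b, g x := by
  rcases hab.eq_or_lt with rfl | hab
  · simp
  have hchord : ∀ x ∈ Icc a b, (b - x) / (b - a) * g a + (x - a) / (b - a) * g b ≤ g x := by
    intro x hx
    have hcomb : (b - x) / (b - a) * a + (x - a) / (b - a) * b = x := by field_simp; ring
    simpa only [smul_eq_mul, hcomb] using hg.2 (left_mem_Icc.2 hab.le) (right_mem_Icc.2 hab.le)
      (div_nonneg (sub_nonneg.2 hx.2) (sub_pos.2 hab).le)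
      (div_nonneg (sub_nonneg.2 hx.1) (sub_pos.2 hab).le) (by field_simp; ring)
  have hleft : ∫ x in a..b, (b - x) = (b - a) ^ 2 / 2 := by
    rw [intervalIntegral.integral_sub intervalIntegrable_const
      intervalIntegral.intervalIntegrable_id]
    simp only [integral_id, intervalIntegral.integral_const, smul_eq_mul]
    ring
  have hright : ∫ x in a..b, (x - a) = (b - a) ^ 2 / 2 := by
    rw [intervalIntegral.integral_sub intervalIntegral.intervalIntegrable_id
      intervalIntegrable_const]
    simp only [integral_id, intervalIntegral.integral_const, smul_eq_mul]
    ring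
  have hmono := intervalIntegral.integral_mono_on hab.le
    (Continuous.intervalIntegrable (by fun_prop) _ _) hint hchord
  rw [intervalIntegral.integral_add (Continuous.intervalIntegrable (by fun_prop) _ _)
    (Continuous.intervalIntegrable (by fun_prop) _ _)] at hmono
  simp only [intervalIntegral.integral_mul_const, intervalIntegral.integral_div, hleft,
    hright] at hmono
  convert hmono using 1
  field_simp

lemma trapezoid_add_le_integral_of_concaveOn_add_sq {f : ℝ → ℝ} {a b κ : ℝ} (hab : a ≤ b)
    (hf : ConcaveOn ℝ (Icc a b) (fun x => f x + κ * x ^ 2))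
    (hint : IntervalIntegrable f volume a b) :
    (b - a) * (f a + f b) / 2 + κ * (b - a) ^ 3 / 6 ≤ ∫ x in a..b, f x := by
  have h := hf.trapezoid_le_integral hab
    (hint.add (Continuous.intervalIntegrable (by fun_prop) _ _))
  rw [intervalIntegral.integral_add hint (Continuous.intervalIntegrable (by fun_prop) _ _),
    intervalIntegral.integral_const_mul, integral_pow] at h
  linear_combination h

lemma Finset.sum_range_succ_eq_sum_trapezoid (f : ℕ → ℝ) (t : ℕ) :
    ∑ n ∈ range (t + 1), f n = ∑ n ∈ range t, (f n + f (n + 1)) / 2 + (f 0 + f t) / 2 := by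
  induction t with
  | zero => simp
  | succ t ih => rw [sum_range_succ, ih, sum_range_succ]; ring

lemma integral_sqrt_mul_sub {t : ℝ} (ht : 0 < t) :
    ∫ x in 0..t, √(x * (t - x)) = π / 8 * t ^ 2 := by
  have hsubst : ∀ x ∈ uIcc 0 t, √(x * (t - x)) = t / 2 * √(1 - (2 / t * x - 1) ^ 2) := by
    intro x hx
    rw [uIcc_of_le ht.le] at hx
    have h : 1 - (2 / t * x - 1) ^ 2 = (2 / t) ^ 2 * (x * (t - x)) := by field_simp; ring
    rw [h, sqrt_mul (sq_nonneg _), sqrt_sq (by positivity)]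
    field_simp
  rw [intervalIntegral.integral_congr hsubst, intervalIntegral.integral_const_mul,
    intervalIntegral.integral_comp_mul_sub (fun u => √(1 - u ^ 2)) (by positivity : 2 / t ≠ 0)]
  have e0 : 2 / t * 0 - 1 = -1 := by ring
  have et : 2 / t * t - 1 = 1 := by field_simp; norm_num
  rw [e0, et, integral_sqrt_one_sub_sq]
  field_simp
  ring

lemma hasDerivAt_sqrt_mul_sub {t x : ℝ} (hx : x ∈ Ioo 0 t) :
    HasDerivAt (fun y => √(y * (t - y))) ((t - 2 * x) / (2 * √(x * (t - x)))) x := by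
  have hq : HasDerivAt (fun y => y * (t - y)) (t - 2 * x) x :=
    ((hasDerivAt_id' x).fun_mul ((hasDerivAt_id' x).const_sub t)).congr_deriv (by ring)
  exact hq.sqrt (mul_pos hx.1 (sub_pos.2 hx.2)).ne'

lemma hasDerivAt_deriv_sqrt_mul_sub {t x : ℝ} (hx : x ∈ Ioo 0 t) :
    HasDerivAt (fun y => (t - 2 * y) / (2 * √(y * (t - y))))
      (-t ^ 2 / (4 * (x * (t - x)) * √(x * (t - x)))) x := by
  have hq : 0 < x * (t - x) := mul_pos hx.1 (sub_pos.2 hx.2)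
  have hs : 0 < √(x * (t - x)) := sqrt_pos.2 hq
  have hsq : √(x * (t - x)) ^ 2 = x * (t - x) := sq_sqrt hq.le
  refine ((((hasDerivAt_id' x).const_mul 2).const_sub t).fun_div
    ((hasDerivAt_sqrt_mul_sub hx).const_mul 2) (by positivity)).congr_deriv ?_
  field_simp
  rw [hsq, mul_div_cancel_right₀ _ hq.ne']
  ring

lemma concaveOn_sqrt_mul_sub_add_sq {t : ℝ} (ht : 0 < t) :
    ConcaveOn ℝ (Icc 0 t) (fun x => √(x * (t - x)) + t⁻¹ * x ^ 2) := by
  refine concaveOn_of_hasDerivWithinAt2_nonpos (convex_Icc 0 t) (by fun_prop)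
    (f' := fun x => (t - 2 * x) / (2 * √(x * (t - x))) + t⁻¹ * (2 * x))
    (f'' := fun x => -t ^ 2 / (4 * (x * (t - x)) * √(x * (t - x))) + t⁻¹ * 2) ?_ ?_ ?_
    <;> simp only [interior_Icc] <;> intro x hx
  · exact ((hasDerivAt_sqrt_mul_sub hx).fun_add
      (((hasDerivAt_pow 2 x).const_mul t⁻¹).congr_deriv (by ring))).hasDerivWithinAt
  · exact ((hasDerivAt_deriv_sqrt_mul_sub hx).fun_add
      ((((hasDerivAt_id' x).const_mul 2).const_mul t⁻¹).congr_deriv (by ring))).hasDerivWithinAt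
  · have hq : 0 < x * (t - x) := mul_pos hx.1 (sub_pos.2 hx.2)
    set s := √(x * (t - x))
    have hs : 0 < s := sqrt_pos.2 hq
    have hsq : s ^ 2 = x * (t - x) := sq_sqrt hq.le
    have h2s : 2 * s ≤ t := by nlinarith [sq_nonneg (t - 2 * x)]
    have hcube : (2 * s) ^ 3 ≤ t ^ 3 := pow_le_pow_left₀ (by positivity) h2s 3
    rw [← hsq, neg_div, neg_add_nonpos_iff, le_div_iff₀ (by positivity)]
    field_simp
    nlinarith

/-- `∑_{n=0}^{t} √(n(t-n)) ≤ (π/8)t² - (t-2)/(6t)`. -/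
theorem sum_sqrt_le (t : ℕ) (ht : 0 < t) :
    ∑ n ∈ Finset.range (t + 1), Real.sqrt ((n : ℝ) * ((t : ℝ) - n)) ≤
      Real.pi / 8 * (t : ℝ) ^ 2 - ((t : ℝ) - 2) / (6 * t) := by
  set f : ℝ → ℝ := fun x => √(x * (t - x))
  have htR : (0 : ℝ) < t := by exact_mod_cast ht
  have hstep : ∀ n ∈ range t, (f n + f (n + 1 : ℕ)) / 2 + 1 / (6 * t) ≤
      ∫ x in (n : ℝ)..(n + 1 : ℕ), f x := by
    intro n hn
    have hsub : Icc (n : ℝ) (n + 1 : ℕ) ⊆ Icc 0 t :=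
      Icc_subset_Icc n.cast_nonneg (by exact_mod_cast mem_range.1 hn)
    have h := trapezoid_add_le_integral_of_concaveOn_add_sq (by simp)
      ((concaveOn_sqrt_mul_sub_add_sq htR).subset hsub (convex_Icc _ _))
      (Continuous.intervalIntegrable (by fun_prop) _ _)
    push_cast at h ⊢
    convert h using 2 <;> ring
  have hends : f 0 + f t = 0 := by simp [f]
  calc ∑ n ∈ range (t + 1), f n
      = ∑ n ∈ range t, (f n + f (n + 1 : ℕ)) / 2 := by
        rw [sum_range_succ_eq_sum_trapezoid (fun n => f n), Nat.cast_zero, hends, zero_div,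
          add_zero]
    _ ≤ ∑ n ∈ range t, ((∫ x in (n : ℝ)..(n + 1 : ℕ), f x) - 1 / (6 * t)) :=
        sum_le_sum fun n hn => le_sub_iff_add_le.2 (hstep n hn)
    _ = π / 8 * t ^ 2 - 1 / 6 := by
        rw [sum_sub_distrib, intervalIntegral.sum_integral_adjacent_intervals
          fun _ _ => Continuous.intervalIntegrable (by fun_prop) _ _, Nat.cast_zero,
          integral_sqrt_mul_sub htR, sum_const, card_range, nsmul_eq_mul]
        field_simp
    _ ≤ π / 8 * t ^ 2 - (t - 2) / (6 * t) := by
        have : ((t : ℝ) - 2) / (6 * t) ≤ 1 / 6 := by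
          rw [div_le_div_iff₀ (by positivity) (by norm_num)]
          linarith
        linarith
end

section
/- Let u, v, w, α, β, γ, δ, ε, ζ, η, θ, ι be elements of a commutative ring satisfying αβ - δ(δ+uη) = vwη², βγ - ζ(ζ+uι) = vwι², and αγ - ε(ε+uθ) = vwθ². Then the determinant of the 6×6 matrix with rows (wη, 0, 0, δ, -α, 0), (-δ-uη, α, 0, vη, 0, 0), (0, wι, 0, 0, ζ, -β), (0, -ζ-uι, β, 0, vι, 0), (-γ, 0, ε, 0, 0, vθ), (0, 0, wθ, γ, 0, -ε-uθ) equals αβγ times [2αβγ - δ(ε+uθ)ζ - (δ+uη)ε(ζ+uι) - vw((2δ+uη)θι - (2ε+uθ)ηι + (2ζ+uι)ηθ)]. -/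
/-!
Expanding the determinant gives, with no hypotheses at all,
`(αβγ)² - αβγ·X + q(δ, η) q(ζ, ι) q(ε, θ)`, where `X` is the cubic in the bracket and
`q(x, y) = x (x + u y) + v w y²`. The three relations say `q(δ, η) = αβ`, `q(ζ, ι) = βγ`,
`q(ε, θ) = αγ`, so the last term is another `(αβγ)²`.
-/

section

variable {R : Type*} [CommRing R]

def quadForm (u v w x y : R) : R := x * (x + u * y) + v * w * y ^ 2

def linearSystemMatrix (u v w α β γ δ ε ζ η θ ι : R) : Matrix (Fin 6) (Fin 6) R :=
  !![w * η, 0, 0, δ, -α, 0;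
     -δ - u * η, α, 0, v * η, 0, 0;
     0, w * ι, 0, 0, ζ, -β;
     0, -ζ - u * ι, β, 0, v * ι, 0;
     -γ, 0, ε, 0, 0, v * θ;
     0, 0, w * θ, γ, 0, -ε - u * θ]

theorem det_linearSystemMatrix (u v w α β γ δ ε ζ η θ ι : R) :
    (linearSystemMatrix u v w α β γ δ ε ζ η θ ι).det =
      (α * β * γ) ^ 2 -
        α * β * γ * (δ * (ε + u * θ) * ζ + (δ + u * η) * ε * (ζ + u * ι) +
          v * w * ((2 * δ + u * η) * θ * ι - (2 * ε + u * θ) * η * ι +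
            (2 * ζ + u * ι) * η * θ)) +
        quadForm u v w δ η * quadForm u v w ζ ι * quadForm u v w ε θ := by
  simp [linearSystemMatrix, quadForm, Matrix.det_succ_row_zero, Fin.sum_univ_succ,
    Fin.succAbove]
  ring

end

/-- the 6×6 determinant identity underlying Theorem 4 (g = 3):
under the three quadratic relations, the determinant of the coefficient
matrix of the linear system equals `αβγ` times the cubic expression. -/
theorem det_linear_system_dim3 {R : Type*} [CommRing R]
    (u v w α β γ δ ε ζ η θ ι : R)
    (h1 : α * β - δ * (δ + u * η) = v * w * η ^ 2)
    (h2 : β * γ - ζ * (ζ + u * ι) = v * w * ι ^ 2)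
    (h3 : α * γ - ε * (ε + u * θ) = v * w * θ ^ 2) :
    Matrix.det !![w * η, 0, 0, δ, -α, 0;
                  -δ - u * η, α, 0, v * η, 0, 0;
                  0, w * ι, 0, 0, ζ, -β;
                  0, -ζ - u * ι, β, 0, v * ι, 0;
                  -γ, 0, ε, 0, 0, v * θ;
                  0, 0, w * θ, γ, 0, -ε - u * θ] =
      α * β * γ *
        (2 * α * β * γ - δ * (ε + u * θ) * ζ - (δ + u * η) * ε * (ζ + u * ι) -
          v * w * ((2 * δ + u * η) * θ * ι - (2 * ε + u * θ) * η * ι +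
            (2 * ζ + u * ι) * η * θ)) := by
  have q1 : quadForm u v w δ η = α * β := by unfold quadForm; linear_combination -h1
  have q2 : quadForm u v w ζ ι = β * γ := by unfold quadForm; linear_combination -h2
  have q3 : quadForm u v w ε θ = α * γ := by unfold quadForm; linear_combination -h3
  change (linearSystemMatrix u v w α β γ δ ε ζ η θ ι).det = _
  rw [det_linearSystemMatrix, q1, q2, q3]
  ring
end
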